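/- arXiv:cs/0606035 — 2 statements merged into one kernel-verified Lean document; each statement's English description precedes it below -/
import Mathlib

section
/- Let K be a field of characteristic 2, let t \geq 4 be a natural number, and let F(x) = \sum_{j=0}^{t} f_j x^j be a polynomial over K, where we set f_j = 0 for all j > t. Then, as polynomials in K[x], F(x) = f_3 x^3 + \sum_{i=0}^{K_t} x^{5i} \big( f_{5i} + f_{5i+1} x + f_{5i+2} x^2 + f_{5i+4} x^4 + f_{5i+8} x^8 \big), where K_t = \lceil (t-4)/5 \rceil. -/
open Polynomial

private lemma aux_sum {R : Type*} [CommRing R] (g : ℕ → R) (Kt : ℕ) :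
    ∑ i ∈ Finset.range (Kt + 1),
        (g (5 * i) + g (5 * i + 1) + g (5 * i + 2) + g (5 * i + 4) + g (5 * i + 8))
      = (∑ j ∈ Finset.range (5 * Kt + 5), g j) - g 3 + g (5 * Kt + 8) := by
  induction Kt with
  | zero => simp [Finset.sum_range_succ]; ring
  | succ n ih =>
    have e0 : 5 * (n + 1) = 5 * n + 5 := by omega
    have e1 : 5 * n + 5 + 1 = 5 * n + 6 := by omega
    have e2 : 5 * n + 5 + 2 = 5 * n + 7 := by omega
    have e4 : 5 * n + 5 + 4 = 5 * n + 9 := by omega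
    have e8 : 5 * n + 5 + 8 = 5 * n + 13 := by omega
    have h10 : 5 * n + 5 + 5 = 5 * n + 10 := by omega
    rw [Finset.sum_range_succ, ih, e0, e1, e2, e4, e8, h10]
    simp only [Finset.sum_range_succ]
    ring

open Polynomial in
/-- Over a field of characteristic 2, every polynomial
`F(x) = ∑_{j=0}^t f_j x^j` with `t ≥ 4` (and `f_j = 0` for `j > t`) decomposes as
`F(x) = f_3 x^3 + ∑_{i=0}^{⌈(t-4)/5⌉} x^{5i} (f_{5i} + f_{5i+1} x + f_{5i+2} x^2
+ f_{5i+4} x^4 + f_{5i+8} x^8)` as polynomials in `K[x]`. -/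
theorem stmt_2 {K : Type*} [Field K] [CharP K 2] (t : ℕ) (ht : 4 ≤ t)
    (f : ℕ → K) (hf : ∀ j, t < j → f j = 0) :
    ∑ j ∈ Finset.range (t + 1), C (f j) * X ^ j
      = C (f 3) * X ^ 3
        + ∑ i ∈ Finset.range (⌈((t : ℚ) - 4) / 5⌉₊ + 1),
            X ^ (5 * i) *
              (C (f (5 * i)) + C (f (5 * i + 1)) * X + C (f (5 * i + 2)) * X ^ 2
                + C (f (5 * i + 4)) * X ^ 4 + C (f (5 * i + 8)) * X ^ 8) := by
  set Kt := ⌈((t : ℚ) - 4) / 5⌉₊ with hKt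
  set g : ℕ → K[X] := fun j => C (f j) * X ^ j with hg
  have htK : t ≤ 5 * Kt + 4 := by
    have h1 : ((t : ℚ) - 4) / 5 ≤ (Kt : ℚ) := Nat.le_ceil _
    have h2 : (t : ℚ) ≤ 5 * Kt + 4 := by
      have := (div_le_iff₀ (by norm_num : (0:ℚ) < 5)).mp h1
      linarith
    exact_mod_cast h2
  have hrhs : ∀ i, X ^ (5 * i) *
        (C (f (5 * i)) + C (f (5 * i + 1)) * X + C (f (5 * i + 2)) * X ^ 2
          + C (f (5 * i + 4)) * X ^ 4 + C (f (5 * i + 8)) * X ^ 8)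
      = g (5 * i) + g (5 * i + 1) + g (5 * i + 2) + g (5 * i + 4) + g (5 * i + 8) := by
    intro i
    simp only [hg, pow_add]
    ring
  have hext : ∑ j ∈ Finset.range (t + 1), g j
      = ∑ j ∈ Finset.range (5 * Kt + 5), g j := by
    apply Finset.sum_subset
    · exact Finset.range_subset_range.mpr (by omega)
    · intro j hj hj2
      simp only [Finset.mem_range] at hj hj2
      simp [hg, hf j (by omega)]
  calc ∑ j ∈ Finset.range (t + 1), g j
      = ∑ j ∈ Finset.range (5 * Kt + 5), g j := hext
    _ = g 3 + ((∑ j ∈ Finset.range (5 * Kt + 5), g j) - g 3 + g (5 * Kt + 8)) := by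
        have : g (5 * Kt + 8) = 0 := by simp [hg, hf (5 * Kt + 8) (by omega)]
        rw [this]; ring
    _ = C (f 3) * X ^ 3 + ∑ i ∈ Finset.range (Kt + 1),
          X ^ (5 * i) *
            (C (f (5 * i)) + C (f (5 * i + 1)) * X + C (f (5 * i + 2)) * X ^ 2
              + C (f (5 * i + 4)) * X ^ 4 + C (f (5 * i + 8)) * X ^ 8) := by
        rw [← aux_sum g Kt]
        simp only [hrhs, hg]
end

section
/- Let K = GF(2^m) with m \geq 1, let \alpha^0, \ldots, \alpha^{m-1} be a basis of K over GF(2), let t \geq 4, and let F(x) = \sum_{j=0}^{t} f_j x^j be a polynomial over K, with f_j = 0 for j > t. Set K_t = \lceil (t-4)/5 \rceil and for 0 \leq i \leq K_t define the 2-polynomials L_i(x) = f_{5i+1} x + f_{5i+2} x^2 + f_{5i+4} x^4 + f_{5i+8} x^8. Let x_0 = 0, x_1, \ldots, x_{2^m-1} be a Gray code enumeration of K with respect to the given basis, i.e., for each j \geq 1 there is \delta(j) \in \{0, \ldots, m-1\} with x_j - x_{j-1} = \alpha^{\delta(j)}. Define recursively A_i^{(0)} = f_{5i} and A_i^{(j)}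 = A_i^{(j-1)} + L_i(\alpha^{\delta(j)}) for 1 \leq j \leq 2^m - 1. Then for every j with 0 \leq j \leq 2^m - 1, F(x_j) = f_3 x_j^3 + \sum_{i=0}^{K_t} x_j^{5i} A_i^{(j)}. -/
/-!
In characteristic 2 the map `y ↦ c₁ y + c₂ y² + c₄ y⁴ + c₈ y⁸` is additive, so along the Gray
code the increments `L_i(α^{δ(j)}) = L_i(x_j - x_{j-1})` telescope and `A_i^{(j)} = f_{5i} + L_i(x_j)`.
It remains to regroup `F`: the monomials `x^{5i}, x^{5i+1}, x^{5i+2}, x^{5i+4}, x^{5i+8}` of the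
blocks `x^{5i} A_i`, together with `f₃ x³`, cover every exponent up to `5 K_t + 4 ≥ t` exactly
once, and the only other exponent, `5 K_t + 8`, carries a zero coefficient.
-/

section Telescoping

variable {M N : Type*} [AddCommGroup M] [AddCommGroup N]

theorem eq_add_map_sub_of_succ_eq_add_map_sub (g : M →+ N) (x : ℕ → M) (A : ℕ → N) (n : ℕ)
    (hA : ∀ j < n, A (j + 1) = A j + g (x (j + 1) - x j)) :
    ∀ j ≤ n, A j = A 0 + g (x j - x 0) := by
  intro j hj
  induction j with
  | zero => simp
  | succ j ih =>
    rw [hA j hj, ih (by omega), add_assoc, ← map_add, sub_add_sub_cancel']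

end Telescoping

section TwoPolynomial

variable {R : Type*} [CommRing R] [CharP R 2]

def twoPolynomialOfDegreeEight (c₁ c₂ c₄ c₈ : R) : R →+ R :=
  AddMonoidHom.mk' (fun y => c₁ * y + c₂ * y ^ 2 + c₄ * y ^ 4 + c₈ * y ^ 8) fun a b => by
    have h₂ := add_pow_char_pow (p := 2) a b (n := 1)
    have h₄ := add_pow_char_pow (p := 2) a b (n := 2)
    have h₈ := add_pow_char_pow (p := 2) a b (n := 3)
    norm_num at h₂ h₄ h₈
    rw [h₂, h₄, h₈]
    ring

@[simp]
theorem twoPolynomialOfDegreeEight_apply (c₁ c₂ c₄ c₈ y : R) :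
    twoPolynomialOfDegreeEight c₁ c₂ c₄ c₈ y = c₁ * y + c₂ * y ^ 2 + c₄ * y ^ 4 + c₈ * y ^ 8 :=
  rfl

end TwoPolynomial

theorem cube_add_sum_range_blocks {R : Type*} [CommRing R] (f : ℕ → R) (y : R) (n : ℕ) :
    f 3 * y ^ 3 + ∑ i ∈ Finset.range n, y ^ (5 * i) *
        (f (5 * i) + (f (5 * i + 1) * y + f (5 * i + 2) * y ^ 2
          + f (5 * i + 4) * y ^ 4 + f (5 * i + 8) * y ^ 8))
      = ∑ k ∈ Finset.range (5 * n), f k * y ^ k + f (5 * n + 3) * y ^ (5 * n + 3) := by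
  induction n with
  | zero => simp
  | succ n ih =>
    rw [Finset.sum_range_succ, ← add_assoc, ih, show 5 * (n + 1) = 5 * n + 4 + 1 by ring]
    simp only [Finset.sum_range_succ]
    ring

theorem le_five_mul_ceil_add_four (t : ℕ) : t ≤ 5 * ⌈((t : ℚ) - 4) / 5⌉₊ + 4 := by
  have hceil := Nat.le_ceil (((t : ℚ) - 4) / 5)
  have : (t : ℚ) ≤ 5 * ⌈((t : ℚ) - 4) / 5⌉₊ + 4 := by linarith
  exact_mod_cast this

theorem stmt_7_general (m : ℕ) (α : GaloisField 2 m)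
    (t : ℕ) (f : ℕ → GaloisField 2 m) (hf : ∀ j, t < j → f j = 0)
    (x : ℕ → GaloisField 2 m) (hx0 : x 0 = 0)
    (δ : ℕ → Fin m)
    (hδ : ∀ j, 1 ≤ j → j ≤ 2 ^ m - 1 → x j - x (j - 1) = α ^ ((δ j : ℕ)))
    (A : ℕ → ℕ → GaloisField 2 m)
    (hA0 : ∀ i, A i 0 = f (5 * i))
    (hArec : ∀ i j, 1 ≤ j → j ≤ 2 ^ m - 1 →
        A i j = A i (j - 1)
          + (f (5 * i + 1) * α ^ ((δ j : ℕ))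
            + f (5 * i + 2) * (α ^ ((δ j : ℕ))) ^ 2
            + f (5 * i + 4) * (α ^ ((δ j : ℕ))) ^ 4
            + f (5 * i + 8) * (α ^ ((δ j : ℕ))) ^ 8))
    (j : ℕ) (hj : j ≤ 2 ^ m - 1) :
    ∑ k ∈ Finset.range (t + 1), f k * (x j) ^ k
      = f 3 * (x j) ^ 3
        + ∑ i ∈ Finset.range (⌈((t : ℚ) - 4) / 5⌉₊ + 1), (x j) ^ (5 * i) * A i j := by
  let L i := twoPolynomialOfDegreeEight (f (5 * i + 1)) (f (5 * i + 2)) (f (5 * i + 4)) (f (5 * i + 8))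
  have hA : ∀ i, A i j = f (5 * i) + L i (x j) := fun i => by
    have hstep : ∀ k < 2 ^ m - 1, A i (k + 1) = A i k + L i (x (k + 1) - x k) := fun k hk => by
      have hdiff := hδ (k + 1) (by omega) hk
      rw [Nat.add_sub_cancel] at hdiff
      rw [hArec i (k + 1) (by omega) hk, Nat.add_sub_cancel, hdiff]
      rfl
    rw [eq_add_map_sub_of_succ_eq_add_map_sub (L i) x (A i) _ hstep j hj, hA0, hx0, sub_zero]
  set K := ⌈((t : ℚ) - 4) / 5⌉₊
  have htK := le_five_mul_ceil_add_four t
  simp only [hA, L, twoPolynomialOfDegreeEight_apply]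
  rw [cube_add_sum_range_blocks, hf (5 * (K + 1) + 3) (by omega), zero_mul, add_zero]
  refine Finset.sum_subset (Finset.range_subset_range.mpr (by omega)) fun k _ hk => ?_
  rw [hf k (by simp at hk; omega), zero_mul]

/-- Correctness of the fast root-finding algorithm.  Let `K = GF(2^m)`
(`m ≥ 1`) with basis `α^0, …, α^{m-1}` over `GF(2)`, let `t ≥ 4` and
`F(x) = ∑_{j=0}^t f_j x^j` with `f_j = 0` for `j > t`.  Put `K_t = ⌈(t-4)/5⌉` and
`L_i(x) = f_{5i+1} x + f_{5i+2} x^2 + f_{5i+4} x^4 + f_{5i+8} x^8`.  Given a Gray code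
enumeration `x_0 = 0, x_1, …, x_{2^m-1}` of `K` with `x_j - x_{j-1} = α^{δ(j)}`, define
`A_i^{(0)} = f_{5i}` and `A_i^{(j)} = A_i^{(j-1)} + L_i(α^{δ(j)})`.  Then
`F(x_j) = f_3 x_j^3 + ∑_{i=0}^{K_t} x_j^{5i} A_i^{(j)}` for all `0 ≤ j ≤ 2^m - 1`. -/
theorem stmt_7 (m : ℕ) (hm : 1 ≤ m) (α : GaloisField 2 m)
    (b : Module.Basis (Fin m) (ZMod 2) (GaloisField 2 m))
    (hb : ∀ k : Fin m, b k = α ^ (k : ℕ))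
    (t : ℕ) (ht : 4 ≤ t) (f : ℕ → GaloisField 2 m) (hf : ∀ j, t < j → f j = 0)
    (x : ℕ → GaloisField 2 m) (hx0 : x 0 = 0)
    (hxbij : Set.BijOn x (Set.Iio (2 ^ m)) Set.univ)
    (δ : ℕ → Fin m)
    (hδ : ∀ j, 1 ≤ j → j ≤ 2 ^ m - 1 → x j - x (j - 1) = α ^ ((δ j : ℕ)))
    (A : ℕ → ℕ → GaloisField 2 m)
    (hA0 : ∀ i, A i 0 = f (5 * i))
    (hArec : ∀ i j, 1 ≤ j → j ≤ 2 ^ m - 1 →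
        A i j = A i (j - 1)
          + (f (5 * i + 1) * α ^ ((δ j : ℕ))
            + f (5 * i + 2) * (α ^ ((δ j : ℕ))) ^ 2
            + f (5 * i + 4) * (α ^ ((δ j : ℕ))) ^ 4
            + f (5 * i + 8) * (α ^ ((δ j : ℕ))) ^ 8))
    (j : ℕ) (hj : j ≤ 2 ^ m - 1) :
    ∑ k ∈ Finset.range (t + 1), f k * (x j) ^ k
      = f 3 * (x j) ^ 3
        + ∑ i ∈ Finset.range (⌈((t : ℚ) - 4) / 5⌉₊ + 1), (x j) ^ (5 * i) * A i j :=
  stmt_7_general m α t f hf x hx0 δ hδ A hA0 hArec j hj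
end
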